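/- Let ℓ ≥ 1, let γ > 0, let θ be a Borel probability measure on the unit sphere S^{ℓ−1} ⊆ ℝ^ℓ, and let μ = γ·(λ ⊗ θ) where λ is Lebesgue measure on ℝ. Then for all 0 < a < b, all r > 1 and all i ∈ {1,…,2ℓ}: μ(Ĝ_i(a, r·b)) ≥ r·μ(Ĝ_i(a,b)). -/

import Mathlib

open MeasureTheory

noncomputable section

/-- The hyperplane `H(α,u) = {x : ⟨x,u⟩ = α}` in `ℝ^ℓ`. -/
def Hplane (ℓ : ℕ) (α : ℝ) (u : EuclideanSpace ℝ (Fin ℓ)) : Set (EuclideanSpace ℝ (Fin ℓ)) :=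
  {x | (inner ℝ x u : ℝ) = α}

/-- The closed half-space `H⁻(α,u) = {x : ⟨x,u⟩ ≤ α}`. -/
def Hminus (ℓ : ℕ) (α : ℝ) (u : EuclideanSpace ℝ (Fin ℓ)) : Set (EuclideanSpace ℝ (Fin ℓ)) :=
  {x | (inner ℝ x u : ℝ) ≤ α}

/-- The closed half-space `H⁺(α,u) = {x : ⟨x,u⟩ ≥ α}`. -/
def Hplus (ℓ : ℕ) (α : ℝ) (u : EuclideanSpace ℝ (Fin ℓ)) : Set (EuclideanSpace ℝ (Fin ℓ)) :=
  {x | α ≤ (inner ℝ x u : ℝ)}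

/-- The hyperplane `H(α,u)` separates the sets `A` and `B`. -/
def Separates {ℓ : ℕ} (A B : Set (EuclideanSpace ℝ (Fin ℓ))) (α : ℝ)
    (u : EuclideanSpace ℝ (Fin ℓ)) : Prop :=
  (A ⊆ Hplus ℓ α u ∧ B ⊆ Hminus ℓ α u) ∨ (A ⊆ Hminus ℓ α u ∧ B ⊆ Hplus ℓ α u)

/-- The facet `f_i(c) = {x : x_i = c, |x_j| ≤ c for j ≠ i}` of the cube `[−c,c]^ℓ`. -/
def facetBase (ℓ : ℕ) (i : Fin ℓ) (c : ℝ) : Set (EuclideanSpace ℝ (Fin ℓ)) :=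
  {x | x i = c ∧ ∀ j, j ≠ i → |x j| ≤ c}

/-- The `2ℓ` facets of the cube `[−c,c]^ℓ`, indexed by `Fin ℓ ⊕ Fin ℓ`:
`Sum.inl i` is `f_i(c)` and `Sum.inr i` is `f_{i+ℓ}(c) = −f_i(c)`. -/
def facet (ℓ : ℕ) (i : Fin ℓ ⊕ Fin ℓ) (c : ℝ) : Set (EuclideanSpace ℝ (Fin ℓ)) :=
  match i with
  | Sum.inl i => facetBase ℓ i c
  | Sum.inr i => (fun x => -x) '' facetBase ℓ i c

/-- The unit sphere `S^{ℓ−1}` in `ℝ^ℓ`. -/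
abbrev unitSphere (ℓ : ℕ) : Set (EuclideanSpace ℝ (Fin ℓ)) :=
  Metric.sphere (0 : EuclideanSpace ℝ (Fin ℓ)) 1

/-- `Ĝ_i(a,b)`: the set of parameters `(α,u) ∈ [0,∞) × S^{ℓ−1}` such that `H(α,u)`
separates `f_i(a)` and `f_i(b)`. -/
def Ghat (ℓ : ℕ) (i : Fin ℓ ⊕ Fin ℓ) (a b : ℝ) : Set (ℝ × unitSphere ℓ) :=
  {p | 0 ≤ p.1 ∧ Separates (facet ℓ i a) (facet ℓ i b) p.1 (p.2 : EuclideanSpace ℝ (Fin ℓ))}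

/-- The hyperplane measure `μ = γ·(λ ⊗ θ)` on `ℝ × S^{ℓ−1}`. -/
def hypMeasure (ℓ : ℕ) (γ : ℝ) (θ : Measure (unitSphere ℓ)) : Measure (ℝ × unitSphere ℓ) :=
  ENNReal.ofReal γ • ((volume : Measure ℝ).prod θ)

/-!
For `c ≥ 0` the values of `⟪x, u⟫` on the facet `f_i(c)` fill the interval `[-c N, c M]`, where
`M = h(u)`, `N = h(-u)` and `h` is the support function of `f_i(1)`. For `α ≥ 0` the hyperplane
`H(α,u)` then separates `f_i(a)` from `f_i(b)` exactly when `max 0 (a M) ≤ α ≤ -b N`, so each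
section of `Ĝ_i(a,b)` over `u` is an interval of length `(-b N - max 0 (a M))⁺`. Replacing `b` by
`r b` multiplies the upper end by `r` and keeps the lower end, which is `≥ 0`, so the length grows
at least by the factor `r`; integrating over `θ` gives the claim.
-/

open scoped RealInnerProductSpace

section Superlinearity

variable {ℓ : ℕ}

/-- `max {⟪x, u⟫ : x ∈ f_k(1)}`. -/
def facetBaseSupport (k : Fin ℓ) (u : EuclideanSpace ℝ (Fin ℓ)) : ℝ :=
  u k + ∑ j ∈ Finset.univ.erase k, |u j|

def facetSupport (i : Fin ℓ ⊕ Fin ℓ) (u : EuclideanSpace ℝ (Fin ℓ)) : ℝ :=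
  match i with
  | Sum.inl k => facetBaseSupport k u
  | Sum.inr k => facetBaseSupport k (-u)

lemma inner_eq_sum_mul (x u : EuclideanSpace ℝ (Fin ℓ)) : ⟪x, u⟫ = ∑ j, x j * u j := by
  simp only [PiLp.inner_apply, RCLike.inner_apply, conj_trivial, mul_comm]

lemma inner_eq_add_sum_erase (k : Fin ℓ) (x u : EuclideanSpace ℝ (Fin ℓ)) :
    ⟪x, u⟫ = x k * u k + ∑ j ∈ Finset.univ.erase k, x j * u j := by
  rw [inner_eq_sum_mul]
  exact (Finset.add_sum_erase _ (fun j => x j * u j) (Finset.mem_univ k)).symm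

lemma inner_le_of_mem_facetBase {k : Fin ℓ} {c : ℝ} {x : EuclideanSpace ℝ (Fin ℓ)}
    (hx : x ∈ facetBase ℓ k c) (u : EuclideanSpace ℝ (Fin ℓ)) :
    ⟪x, u⟫ ≤ c * facetBaseSupport k u := by
  obtain ⟨hxk, hxj⟩ := hx
  have hterm : ∀ j ∈ Finset.univ.erase k, x j * u j ≤ c * |u j| := fun j hj => calc
    x j * u j ≤ |x j| * |u j| := by rw [← abs_mul]; exact le_abs_self _
    _ ≤ c * |u j| := by gcongr; exact hxj j (Finset.ne_of_mem_erase hj)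
  rw [inner_eq_add_sum_erase k, facetBaseSupport, hxk, mul_add, Finset.mul_sum]
  exact add_le_add le_rfl (Finset.sum_le_sum hterm)

lemma exists_mem_facetBase_inner_eq (k : Fin ℓ) {c : ℝ} (hc : 0 ≤ c)
    (u : EuclideanSpace ℝ (Fin ℓ)) :
    ∃ x ∈ facetBase ℓ k c, ⟪x, u⟫ = c * facetBaseSupport k u := by
  classical
  let x : EuclideanSpace ℝ (Fin ℓ) :=
    WithLp.toLp 2 fun j => if j = k then c else if 0 ≤ u j then c else -c
  have hx : ∀ j ≠ k, x j * u j = c * |u j| ∧ |x j| ≤ c := fun j hj => by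
    rcases le_or_gt 0 (u j) with h | h
    · simp [x, hj, h, abs_of_nonneg h, abs_of_nonneg hc]
    · simp [x, hj, h.not_ge, abs_of_neg h, abs_of_nonneg hc]
  refine ⟨x, ⟨by simp [x], fun j hj => (hx j hj).2⟩, ?_⟩
  rw [inner_eq_add_sum_erase k, facetBaseSupport, mul_add, Finset.mul_sum,
    Finset.sum_congr rfl fun j hj => (hx j (Finset.ne_of_mem_erase hj)).1]
  simp [x]

lemma facetBase_subset_Hminus_iff (k : Fin ℓ) {c : ℝ} (hc : 0 ≤ c) (α : ℝ)
    (u : EuclideanSpace ℝ (Fin ℓ)) :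
    facetBase ℓ k c ⊆ Hminus ℓ α u ↔ c * facetBaseSupport k u ≤ α := by
  refine ⟨fun h => ?_, fun h x hx => (inner_le_of_mem_facetBase hx u).trans h⟩
  obtain ⟨x, hx, hxu⟩ := exists_mem_facetBase_inner_eq k hc u
  exact hxu ▸ h hx

lemma facet_subset_Hminus_iff (i : Fin ℓ ⊕ Fin ℓ) {c : ℝ} (hc : 0 ≤ c) (α : ℝ)
    (u : EuclideanSpace ℝ (Fin ℓ)) :
    facet ℓ i c ⊆ Hminus ℓ α u ↔ c * facetSupport i u ≤ α := by
  cases i with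
  | inl k => exact facetBase_subset_Hminus_iff k hc α u
  | inr k =>
    have hneg : (fun x => -x) ⁻¹' Hminus ℓ α u = Hminus ℓ α (-u) := by
      ext x; simp [Hminus, inner_neg_left, inner_neg_right]
    rw [facet, Set.image_subset_iff, hneg]
    exact facetBase_subset_Hminus_iff k hc α (-u)

lemma Hplus_eq_Hminus_neg (α : ℝ) (u : EuclideanSpace ℝ (Fin ℓ)) :
    Hplus ℓ α u = Hminus ℓ (-α) (-u) := by
  ext x; simp [Hplus, Hminus, inner_neg_right]

lemma facet_subset_Hplus_iff (i : Fin ℓ ⊕ Fin ℓ) {c : ℝ} (hc : 0 ≤ c) (α : ℝ)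
    (u : EuclideanSpace ℝ (Fin ℓ)) :
    facet ℓ i c ⊆ Hplus ℓ α u ↔ α ≤ -(c * facetSupport i (-u)) := by
  rw [Hplus_eq_Hminus_neg, facet_subset_Hminus_iff i hc, le_neg]

/-- For `α ≥ 0`, separating with the smaller copy on the far side forces `α = 0`, and then the
other configuration holds as well. -/
lemma separation_of_scaled_iff {a b M N α : ℝ} (ha : 0 < a) (hab : a < b) (hα : 0 ≤ α) :
    (α ≤ -(a * N) ∧ b * M ≤ α) ∨ (a * M ≤ α ∧ α ≤ -(b * N)) ↔ a * M ≤ α ∧ α ≤ -(b * N) := by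
  refine ⟨?_, Or.inr⟩
  rintro (⟨h₁, h₂⟩ | h)
  · constructor <;> nlinarith
  · exact h

lemma Ghat_eq_setOf_mem_Icc {a b : ℝ} (ha : 0 < a) (hab : a < b) (i : Fin ℓ ⊕ Fin ℓ) :
    Ghat ℓ i a b = {p | p.1 ∈ Set.Icc (max 0 (a * facetSupport i (p.2 : EuclideanSpace ℝ (Fin ℓ))))
      (-(b * facetSupport i (-(p.2 : EuclideanSpace ℝ (Fin ℓ)))))} := by
  ext ⟨α, u⟩
  have hb := ha.trans hab
  simp only [Ghat, Separates, Set.mem_ofPred_eq, Set.mem_Icc, max_le_iff,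
    facet_subset_Hplus_iff i ha.le, facet_subset_Hplus_iff i hb.le,
    facet_subset_Hminus_iff i ha.le, facet_subset_Hminus_iff i hb.le]
  exact (and_congr_right (separation_of_scaled_iff ha hab)).trans and_assoc.symm

lemma measurable_facetSupport (i : Fin ℓ ⊕ Fin ℓ) :
    Measurable (facetSupport (ℓ := ℓ) i) := by
  have hcoord (j : Fin ℓ) : Measurable fun u : EuclideanSpace ℝ (Fin ℓ) => u j :=
    (EuclideanSpace.proj j).continuous.measurable
  have hbase (k : Fin ℓ) : Measurable (facetBaseSupport (ℓ := ℓ) k) :=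
    (hcoord k).add (Finset.measurable_sum _ fun j _ => (hcoord j).abs)
  cases i with
  | inl k => exact hbase k
  | inr k => exact (hbase k).comp measurable_neg

lemma volume_prod_setOf_mem_Icc {Y : Type*} [MeasurableSpace Y] (ν : Measure Y) [SFinite ν]
    {f g : Y → ℝ} (hf : Measurable f) (hg : Measurable g) :
    (volume.prod ν) {p : ℝ × Y | p.1 ∈ Set.Icc (f p.2) (g p.2)} =
      ∫⁻ y, ENNReal.ofReal (g y - f y) ∂ν := by
  rw [Measure.prod_apply_symm]
  · exact lintegral_congr fun y => (Real.volume_Icc : volume (Set.Icc (f y) (g y)) = _)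
  · exact (measurableSet_le (hf.comp measurable_snd) measurable_fst).inter
      (measurableSet_le measurable_fst (hg.comp measurable_snd))

lemma ofReal_mul_ofReal_sub_le {r x y : ℝ} (hr : 1 ≤ r) (hx : 0 ≤ x) :
    ENNReal.ofReal r * ENNReal.ofReal (y - x) ≤ ENNReal.ofReal (r * y - x) := by
  rw [← ENNReal.ofReal_mul (by linarith)]
  apply ENNReal.ofReal_le_ofReal
  nlinarith

lemma hypMeasure_Ghat (γ : ℝ) (θ : Measure (unitSphere ℓ)) [SFinite θ] {a b : ℝ} (ha : 0 < a)
    (hab : a < b) (i : Fin ℓ ⊕ Fin ℓ) :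
    hypMeasure ℓ γ θ (Ghat ℓ i a b) = ENNReal.ofReal γ *
      ∫⁻ u, ENNReal.ofReal (-(b * facetSupport i (-(u : EuclideanSpace ℝ (Fin ℓ)))) -
        max 0 (a * facetSupport i (u : EuclideanSpace ℝ (Fin ℓ)))) ∂θ := by
  have hS : Measurable fun u : unitSphere ℓ => facetSupport i (u : EuclideanSpace ℝ (Fin ℓ)) :=
    (measurable_facetSupport i).comp measurable_subtype_coe
  have hS' : Measurable fun u : unitSphere ℓ => facetSupport i (-(u : EuclideanSpace ℝ (Fin ℓ))) :=
    (measurable_facetSupport i).comp measurable_subtype_coe.neg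
  rw [hypMeasure, Measure.smul_apply, smul_eq_mul, Ghat_eq_setOf_mem_Icc ha hab]
  exact congrArg _ <|
    volume_prod_setOf_mem_Icc θ (measurable_const.max (hS.const_mul a)) (hS'.const_mul b).neg

end Superlinearity

theorem stmt5_general (ℓ : ℕ) (γ : ℝ)
    (θ : Measure (unitSphere ℓ)) [IsProbabilityMeasure θ]
    (a b r : ℝ) (ha : 0 < a) (hab : a < b) (hr : 1 < r) (i : Fin ℓ ⊕ Fin ℓ) :
    ENNReal.ofReal r * hypMeasure ℓ γ θ (Ghat ℓ i a b) ≤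
      hypMeasure ℓ γ θ (Ghat ℓ i a (r * b)) := by
  have hb_lt : b < r * b := lt_mul_left (ha.trans hab) hr
  rw [hypMeasure_Ghat γ θ ha hab, hypMeasure_Ghat γ θ ha (hab.trans hb_lt), mul_left_comm,
    ← lintegral_const_mul' _ _ ENNReal.ofReal_ne_top]
  gcongr with u
  convert ofReal_mul_ofReal_sub_le hr.le (le_max_left _ _) using 2
  ring

/-- Superlinearity: `μ(Ĝ_i(a, r·b)) ≥ r·μ(Ĝ_i(a,b))` for `r > 1`. -/
theorem stmt5 (ℓ : ℕ) (hℓ : 1 ≤ ℓ) (γ : ℝ) (hγ : 0 < γ)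
    (θ : Measure (unitSphere ℓ)) [IsProbabilityMeasure θ]
    (a b r : ℝ) (ha : 0 < a) (hab : a < b) (hr : 1 < r) (i : Fin ℓ ⊕ Fin ℓ) :
    ENNReal.ofReal r * hypMeasure ℓ γ θ (Ghat ℓ i a b) ≤
      hypMeasure ℓ γ θ (Ghat ℓ i a (r * b)) :=
  stmt5_general ℓ γ θ a b r ha hab hr i

end
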